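/- arXiv:2604.02579 — 2 statements merged into one kernel-verified Lean document; each statement's English description precedes it below -/
import Mathlib

section
/- Let ρ : [0,T] × [0,1] → ℝ be a C² (in space) and C¹ (in time) solution of the heat equation ∂_t ρ = ∂²_{uu} ρ on (0,T]×(0,1) with the Wentzell boundary condition ∂²_{uu}ρ(t,0) = α ∂_u ρ(t,0) and Neumann condition ∂_u ρ(t,1) = 0 for all t ∈ (0,T]. Then the quantity t ↦ ρ(t,0)/α + ∫₀¹ ρ(t,u) du is constant in time. -/
/-!
Formally, `d/dt (ρ(t,0)/α + ∫₀¹ ρ(t,u) du) = ∂²ᵤρ(t,0)/α + ∫₀¹ ∂²ᵤρ(t,u) du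
= ∂ᵤρ(t,0) + ∂ᵤρ(t,1) - ∂ᵤρ(t,0) = 0`. Since `∂ₜρ` is only known pointwise, differentiation
under the integral is replaced by a comparison argument. Given `τ₀`, approximate `∂²ᵤρ(τ₀,·)`
from above by a polynomial `q` obeying the boundary inequalities `q''(0) ≥ α q'(0)`, `q'(1) ≥ 0`;
then `ρ(τ₀,·) + (τ - τ₀) q` is a strict supersolution for short times, and the parabolic maximum
principle puts `ρ(τ,·)` below it. Integrating against `δ₀/α + du` shows that the upper right Dini
derivative of the mass is `≤ 0`, so the mass is nonincreasing; applying this to `-ρ` as well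
shows that it is constant.
-/

open Set Filter Topology Polynomial

theorem IsMaxOn.hasDerivWithinAt_mul_sub_nonpos {f : ℝ → ℝ} {s : Set ℝ} {a b f' : ℝ}
    (h : IsMaxOn f s a) (hf : HasDerivWithinAt f f' s a) (hab : segment ℝ a b ⊆ s) :
    f' * (b - a) ≤ 0 := by
  simpa [mul_comm] using
    h.localize.hasFDerivWithinAt_nonpos hf (sub_mem_posTangentConeAt_of_segment_subset hab)

/-- Second-derivative test from the left: it needs `f' u₀ ≤ 0` only, so it also applies at the
right endpoint. -/
theorem derivWithin_derivWithin_nonpos_of_isMaxOn {f : ℝ → ℝ} {a b u₀ : ℝ}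
    (hf : ContDiffOn ℝ 2 f (Icc a b)) (hu₀ : u₀ ∈ Ioc a b) (hmax : IsMaxOn f (Icc a b) u₀)
    (hd : derivWithin f (Icc a b) u₀ ≤ 0) :
    derivWithin (derivWithin f (Icc a b)) (Icc a b) u₀ ≤ 0 := by
  have hs : UniqueDiffOn ℝ (Icc a b) := uniqueDiffOn_Icc (hu₀.1.trans_le hu₀.2)
  have hf₁ : ContDiffOn ℝ 1 (derivWithin f (Icc a b)) (Icc a b) := hf.derivWithin hs (by norm_num)
  by_contra! hpos
  have hslope : Tendsto (slope (derivWithin f (Icc a b)) u₀) (𝓝[<] u₀)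
      (𝓝 (derivWithin (derivWithin f (Icc a b)) (Icc a b) u₀)) := by
    rw [← nhdsWithin_Ioo_eq_nhdsLT hu₀.1]
    exact (hasDerivWithinAt_iff_tendsto_slope' (by simp)).1
      (((hf₁.differentiableOn one_ne_zero) u₀ (Ioc_subset_Icc_self hu₀)).hasDerivWithinAt.mono
        (Ioo_subset_Icc_self.trans (Icc_subset_Icc_right hu₀.2)))
  obtain ⟨l, hl, hneg⟩ := mem_nhdsLT_iff_exists_Ioo_subset.1
    ((hslope.eventually (lt_mem_nhds hpos)).and (Ioo_mem_nhdsLT hu₀.1))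
  obtain ⟨m, hlm, hmu⟩ := exists_between (mem_Iio.1 hl)
  have hm : m ∈ Ioo a u₀ := (hneg ⟨hlm, hmu⟩).2
  -- on `(m, u₀)` the derivative is negative, since its slope from `u₀` is positive
  have hanti : StrictAntiOn f (Icc m u₀) := by
    refine strictAntiOn_of_deriv_neg (convex_Icc m u₀)
      (hf.continuousOn.mono (Icc_subset_Icc hm.1.le hu₀.2)) fun x hx => ?_
    rw [interior_Icc] at hx
    obtain ⟨hx_slope, hxa, -⟩ := hneg ⟨hlm.trans hx.1, hx.2⟩
    rw [← derivWithin_of_mem_nhds (Icc_mem_nhds hxa (hx.2.trans_le hu₀.2))]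
    rw [slope_def_field, div_pos_iff] at hx_slope
    rcases hx_slope with ⟨-, h⟩ | ⟨h, -⟩ <;> linarith [hx.2]
  exact (hanti (left_mem_Icc.2 hm.2.le) (right_mem_Icc.2 hm.2.le) hm.2).not_ge
    (hmax ⟨hm.1.le, hm.2.le.trans hu₀.2⟩)

theorem derivWithin_derivWithin_sub {f g : ℝ → ℝ} {s : Set ℝ} {x : ℝ} (hs : UniqueDiffOn ℝ s)
    (hf : ContDiffOn ℝ 2 f s) (hg : ContDiffOn ℝ 2 g s) (hx : x ∈ s) :
    derivWithin (derivWithin (fun y => f y - g y) s) s x =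
      derivWithin (derivWithin f s) s x - derivWithin (derivWithin g s) s x := by
  have h₁ : EqOn (derivWithin (fun y => f y - g y) s)
      (fun y => derivWithin f s y - derivWithin g s y) s := fun y hy =>
    derivWithin_fun_sub (hf.differentiableOn two_ne_zero y hy) (hg.differentiableOn two_ne_zero y hy)
  rw [derivWithin_congr h₁ (h₁ hx)]
  exact derivWithin_fun_sub
    ((hf.derivWithin hs (m := 1) (by norm_num)).differentiableOn one_ne_zero x hx)
    ((hg.derivWithin hs (m := 1) (by norm_num)).differentiableOn one_ne_zero x hx)

theorem Polynomial.contDiff_eval (p : ℝ[X]) {n : WithTop ℕ∞} : ContDiff ℝ n fun x => p.eval x := by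
  simpa using p.contDiff_aeval (𝕜 := ℝ) n

theorem Polynomial.derivWithin_derivWithin (p : ℝ[X]) {s : Set ℝ} {x : ℝ} (hs : UniqueDiffOn ℝ s)
    (hx : x ∈ s) :
    derivWithin (derivWithin (fun y => p.eval y) s) s x = p.derivative.derivative.eval x := by
  rw [derivWithin_congr (fun y hy => p.derivWithin (hs y hy)) (p.derivWithin (hs x hx))]
  exact p.derivative.derivWithin (hs x hx)

theorem derivWithin_sub_sub_eval {f g : ℝ → ℝ} {s : Set ℝ} {x : ℝ} (hs : UniqueDiffWithinAt ℝ s x)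
    (hf : DifferentiableWithinAt ℝ f s x) (hg : DifferentiableWithinAt ℝ g s x) (p : ℝ[X]) :
    derivWithin (fun y => f y - g y - p.eval y) s x =
      derivWithin f s x - derivWithin g s x - p.derivative.eval x := by
  rw [derivWithin_fun_sub (hf.fun_sub hg) p.differentiableWithinAt, derivWithin_fun_sub hf hg,
    p.derivWithin hs]

theorem derivWithin_derivWithin_sub_sub_eval {f g : ℝ → ℝ} {s : Set ℝ} {x : ℝ}
    (hs : UniqueDiffOn ℝ s) (hf : ContDiffOn ℝ 2 f s) (hg : ContDiffOn ℝ 2 g s) (p : ℝ[X])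
    (hx : x ∈ s) :
    derivWithin (derivWithin (fun y => f y - g y - p.eval y) s) s x =
      derivWithin (derivWithin f s) s x - derivWithin (derivWithin g s) s x -
        p.derivative.derivative.eval x := by
  rw [derivWithin_derivWithin_sub hs (hf.sub hg) p.contDiff_eval.contDiffOn hx,
    derivWithin_derivWithin_sub hs hf hg hx, p.derivWithin_derivWithin hs hx]

theorem IsCompact.exists_pos_forall_mul_lt {f : ℝ → ℝ} {K : Set ℝ} (hK : IsCompact K)
    (hf : ContinuousOn f K) {δ : ℝ} (hδ : 0 < δ) :
    ∃ Δ > 0, ∀ t ∈ Icc 0 Δ, ∀ u ∈ K, t * f u < δ := by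
  obtain ⟨M, hM⟩ := hK.exists_bound_of_continuousOn hf
  refine ⟨δ / (|M| + 1), by positivity, fun t ht u hu => ?_⟩
  calc t * f u ≤ t * |M| :=
        mul_le_mul_of_nonneg_left (((le_abs_self _).trans (hM u hu)).trans (le_abs_self M)) ht.1
    _ ≤ δ / (|M| + 1) * |M| := mul_le_mul_of_nonneg_right ht.2 (abs_nonneg M)
    _ < δ := by rw [div_mul_eq_mul_div, div_lt_iff₀ (by positivity)]; nlinarith [abs_nonneg M]

theorem continuousOn_intervalIntegral_of_continuousOn_prod {f : ℝ → ℝ → ℝ} {a b c d : ℝ}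
    (hab : a ≤ b) (hcd : c ≤ d)
    (hf : ContinuousOn (fun p : ℝ × ℝ => f p.1 p.2) (Icc a b ×ˢ Icc c d)) :
    ContinuousOn (fun x => ∫ y in c..d, f x y) (Icc a b) := by
  have hext : Continuous fun p : ℝ × ℝ => f (projIcc a b hab p.1) (projIcc c d hcd p.2) :=
    show Continuous ((fun p : ℝ × ℝ => f p.1 p.2) ∘
      fun p : ℝ × ℝ => ((projIcc a b hab p.1 : ℝ), (projIcc c d hcd p.2 : ℝ))) from
    hf.comp_continuous (by fun_prop) fun p => ⟨(projIcc a b hab p.1).2, (projIcc c d hcd p.2).2⟩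
  refine (intervalIntegral.continuous_parametric_intervalIntegral_of_continuous'
    (f := fun x y => f (projIcc a b hab x) (projIcc c d hcd y)) hext c d).continuousOn.congr
    fun x hx => intervalIntegral.integral_congr fun y hy => ?_
  rw [uIcc_of_le hcd] at hy
  simp [projIcc_of_mem hab hx, projIcc_of_mem hcd hy]

theorem derivWithin_derivWithin_nonpos_of_isMaxOn_of_wentzell {α : ℝ} (hα : 0 ≤ α) {f : ℝ → ℝ}
    {u₀ : ℝ} (hf : ContDiffOn ℝ 2 f (Icc 0 1)) (hu₀ : u₀ ∈ Icc (0:ℝ) 1)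
    (hmax : IsMaxOn f (Icc 0 1) u₀)
    (hleft : derivWithin (derivWithin f (Icc 0 1)) (Icc 0 1) 0 ≤ α * derivWithin f (Icc 0 1) 0)
    (hright : derivWithin f (Icc 0 1) 1 ≤ 0) :
    derivWithin (derivWithin f (Icc 0 1)) (Icc 0 1) u₀ ≤ 0 := by
  have hd : derivWithin f (Icc 0 1) u₀ ≤ 0 := by
    rcases hu₀.2.lt_or_eq with hlt | rfl
    · have := hmax.hasDerivWithinAt_mul_sub_nonpos
        ((hf.differentiableOn two_ne_zero u₀ hu₀).hasDerivWithinAt)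
        ((segment_eq_Icc hu₀.2).trans_subset (Icc_subset_Icc_left hu₀.1))
      nlinarith
    · exact hright
  rcases hu₀.1.eq_or_lt with rfl | hpos
  · exact hleft.trans (mul_nonpos_of_nonneg_of_nonpos hα hd)
  · exact derivWithin_derivWithin_nonpos_of_isMaxOn hf ⟨hpos, hu₀.2⟩ hmax hd

theorem wentzell_maximum_principle {α t₁ t₂ : ℝ} (hα : 0 ≤ α) {w W : ℝ → ℝ → ℝ}
    (hcont : ContinuousOn (fun p : ℝ × ℝ => w p.1 p.2) (Icc t₁ t₂ ×ˢ Icc 0 1))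
    (hspace : ∀ τ ∈ Ioc t₁ t₂, ContDiffOn ℝ 2 (w τ) (Icc 0 1))
    (htime : ∀ τ ∈ Ioc t₁ t₂, ∀ u ∈ Icc (0:ℝ) 1,
      HasDerivWithinAt (fun σ => w σ u) (W τ u) (Iic τ) τ)
    (hsub : ∀ τ ∈ Ioc t₁ t₂, ∀ u ∈ Icc (0:ℝ) 1,
      W τ u < derivWithin (derivWithin (w τ) (Icc 0 1)) (Icc 0 1) u)
    (hleft : ∀ τ ∈ Ioc t₁ t₂,
      derivWithin (derivWithin (w τ) (Icc 0 1)) (Icc 0 1) 0 ≤ α * derivWithin (w τ) (Icc 0 1) 0)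
    (hright : ∀ τ ∈ Ioc t₁ t₂, derivWithin (w τ) (Icc 0 1) 1 ≤ 0)
    (hinit : ∀ u ∈ Icc (0:ℝ) 1, w t₁ u ≤ 0) :
    ∀ τ ∈ Icc t₁ t₂, ∀ u ∈ Icc (0:ℝ) 1, w τ u ≤ 0 := by
  intro τ hτ u hu
  obtain ⟨⟨t₀, u₀⟩, ⟨ht₀, hu₀⟩, hmax⟩ :=
    (isCompact_Icc.prod isCompact_Icc).exists_isMaxOn ⟨(τ, u), hτ, hu⟩ hcont
  suffices t₀ = t₁ by
    calc w τ u ≤ w t₀ u₀ := hmax (mk_mem_prod hτ hu)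
      _ ≤ 0 := this ▸ hinit u₀ hu₀
  by_contra hne
  have ht₀' : t₀ ∈ Ioc t₁ t₂ := ⟨lt_of_le_of_ne ht₀.1 (Ne.symm hne), ht₀.2⟩
  have htime_nonneg : 0 ≤ W t₀ u₀ := by
    have := IsMaxOn.hasDerivWithinAt_mul_sub_nonpos (b := t₁)
      (fun σ hσ => hmax (mk_mem_prod ⟨hσ.1, hσ.2.trans ht₀.2⟩ hu₀) :
        IsMaxOn (fun σ => w σ u₀) (Icc t₁ t₀) t₀)
      ((htime t₀ ht₀' u₀ hu₀).mono Icc_subset_Iic_self)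
      (by rw [segment_symm, segment_eq_Icc ht₀.1])
    nlinarith [ht₀'.1]
  have hspace_nonpos := derivWithin_derivWithin_nonpos_of_isMaxOn_of_wentzell hα
    (hspace t₀ ht₀') hu₀ (fun v hv => hmax (mk_mem_prod ht₀ hv)) (hleft t₀ ht₀') (hright t₀ ht₀')
  linarith [hsub t₀ ht₀' u₀ hu₀]

/-- The mass of `f` for the measure `δ₀ / α + du` on `[0, 1]`. -/
noncomputable def wentzellMass (α : ℝ) (f : ℝ → ℝ) : ℝ := f 0 / α + ∫ u in (0:ℝ)..1, f u

section wentzellMass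

variable {α : ℝ} {f g : ℝ → ℝ}

theorem wentzellMass_mono (hα : 0 ≤ α) (hf : ContinuousOn f (Icc 0 1))
    (hg : ContinuousOn g (Icc 0 1)) (hfg : ∀ u ∈ Icc (0:ℝ) 1, f u ≤ g u) :
    wentzellMass α f ≤ wentzellMass α g :=
  add_le_add (div_le_div_of_nonneg_right (hfg 0 ⟨le_rfl, zero_le_one⟩) hα)
    (intervalIntegral.integral_mono_on zero_le_one (hf.intervalIntegrable_of_Icc zero_le_one)
      (hg.intervalIntegrable_of_Icc zero_le_one) hfg)

theorem wentzellMass_add_mul (hf : IntervalIntegrable f MeasureTheory.volume 0 1)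
    (hg : IntervalIntegrable g MeasureTheory.volume 0 1) (c : ℝ) :
    wentzellMass α (fun u => f u + c * g u) = wentzellMass α f + c * wentzellMass α g := by
  simp only [wentzellMass, intervalIntegral.integral_add hf (hg.const_mul c),
    intervalIntegral.integral_const_mul]
  ring

theorem wentzellMass_add_const (hf : IntervalIntegrable f MeasureTheory.volume 0 1) (c : ℝ) :
    wentzellMass α (fun u => f u + c) = wentzellMass α f + c * (α⁻¹ + 1) := by
  simp only [wentzellMass, intervalIntegral.integral_add hf intervalIntegrable_const,
    intervalIntegral.integral_const, sub_zero, smul_eq_mul, one_mul]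
  ring

theorem wentzellMass_neg (f : ℝ → ℝ) : wentzellMass α (fun u => -f u) = -wentzellMass α f := by
  simp only [wentzellMass, intervalIntegral.integral_neg, neg_div]
  ring

theorem wentzellMass_derivWithin_derivWithin (hα : α ≠ 0) (hf : ContDiffOn ℝ 2 f (Icc 0 1))
    (hleft : derivWithin (derivWithin f (Icc 0 1)) (Icc 0 1) 0 = α * derivWithin f (Icc 0 1) 0)
    (hright : derivWithin f (Icc 0 1) 1 = 0) :
    wentzellMass α (derivWithin (derivWithin f (Icc 0 1)) (Icc 0 1)) = 0 := by
  rw [wentzellMass, intervalIntegral.integral_derivWithin_Icc_of_contDiffOn_Icc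
    (hf.derivWithin uniqueDiffOn_Icc_zero_one (by norm_num)) zero_le_one, hleft, hright]
  field_simp
  ring

end wentzellMass

theorem exists_polynomial_wentzell_supersolution {α δ : ℝ} (hα : 0 ≤ α) (hδ : 0 < δ)
    {G : ℝ → ℝ} (hG : ContinuousOn G (Icc 0 1)) :
    ∃ q : ℝ[X], (∀ u ∈ Icc (0:ℝ) 1, G u + δ ≤ q.eval u ∧ q.eval u ≤ G u + 4 * δ) ∧
      α * q.derivative.eval 0 ≤ q.derivative.derivative.eval 0 ∧ 0 ≤ q.derivative.eval 1 := by
  obtain ⟨p, hp⟩ := exists_polynomial_near_of_continuousOn 0 1 G hG δ hδ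
  obtain ⟨n, hn⟩ := exists_nat_ge
    (2 * (|p.derivative.eval 1| + |p.derivative.derivative.eval 0 - α * p.derivative.eval 0|) / δ)
  rw [div_le_iff₀ hδ] at hn
  -- `ψ` takes values in `[0, 2]` on `[0, 1]` but has slopes `∓(n + 2)` at the endpoints
  set ψ : ℝ[X] := (1 - X) ^ (n + 2) + X ^ (n + 2)
  have hψ'₀ : ψ.derivative.eval 0 = -(n + 2) := by simp [ψ, derivative_pow]
  have hψ'₁ : ψ.derivative.eval 1 = n + 2 := by simp [ψ, derivative_pow]
  have hψ''₀ : (n + 2) * (n + 1) ≤ ψ.derivative.derivative.eval 0 := by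
    simpa [ψ, derivative_pow] using (by positivity : (0:ℝ) ≤ (n + 2) * ((n + 1) * 0 ^ n))
  refine ⟨p + C (2 * δ) + C (δ / 2) * ψ, fun u hu => ?_, ?_, ?_⟩
  · have h₁ : (1 - u) ^ (n + 2) ≤ 1 := pow_le_one₀ (by linarith [hu.2]) (by linarith [hu.1])
    have h₂ : u ^ (n + 2) ≤ 1 := pow_le_one₀ hu.1 hu.2
    have h₃ : 0 ≤ (1 - u) ^ (n + 2) := pow_nonneg (by linarith [hu.2]) _
    have h₄ : 0 ≤ u ^ (n + 2) := pow_nonneg hu.1 _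
    have := abs_lt.1 (hp u hu)
    simp only [ψ, eval_add, eval_mul, eval_C, eval_pow, eval_sub, eval_one, eval_X]
    constructor <;> nlinarith
  · simp only [derivative_add, derivative_mul, derivative_C, zero_mul, zero_add, add_zero,
      eval_add, eval_mul, eval_C, hψ'₀]
    have : δ * n ≤ δ * ψ.derivative.derivative.eval 0 :=
      mul_le_mul_of_nonneg_left (by nlinarith) hδ.le
    nlinarith [neg_abs_le (p.derivative.derivative.eval 0 - α * p.derivative.eval 0),
      abs_nonneg (p.derivative.eval 1), mul_nonneg (mul_nonneg hα hδ.le) n.cast_nonneg]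
  · simp only [derivative_add, derivative_mul, derivative_C, zero_mul, zero_add, add_zero,
      eval_add, eval_mul, eval_C, hψ'₁]
    nlinarith [neg_abs_le (p.derivative.eval 1),
      abs_nonneg (p.derivative.derivative.eval 0 - α * p.derivative.eval 0)]

structure IsWentzellSolution (T α : ℝ) (ρ : ℝ → ℝ → ℝ) : Prop where
  continuousOn : ContinuousOn (fun p : ℝ × ℝ => ρ p.1 p.2) (Icc 0 T ×ˢ Icc 0 1)
  contDiffOn : ∀ t ∈ Ioc 0 T, ContDiffOn ℝ 2 (ρ t) (Icc 0 1)
  hasDerivAt : ∀ t ∈ Ioc 0 T, ∀ u ∈ Icc (0:ℝ) 1,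
    HasDerivAt (fun s => ρ s u) (derivWithin (derivWithin (ρ t) (Icc 0 1)) (Icc 0 1) u) t
  wentzell : ∀ t ∈ Ioc 0 T,
    derivWithin (derivWithin (ρ t) (Icc 0 1)) (Icc 0 1) 0 = α * derivWithin (ρ t) (Icc 0 1) 0
  neumann : ∀ t ∈ Ioc 0 T, derivWithin (ρ t) (Icc 0 1) 1 = 0

namespace IsWentzellSolution

variable {T α : ℝ} {ρ : ℝ → ℝ → ℝ}

theorem neg (h : IsWentzellSolution T α ρ) : IsWentzellSolution T α (fun t u => -ρ t u) := by
  have hd₁ (f : ℝ → ℝ) : derivWithin (fun u => -f u) (Icc 0 1) = -derivWithin f (Icc 0 1) :=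
    funext fun _ => derivWithin.fun_neg
  have hd₂ (f : ℝ → ℝ) : derivWithin (derivWithin (fun u => -f u) (Icc 0 1)) (Icc 0 1) =
      -derivWithin (derivWithin f (Icc 0 1)) (Icc 0 1) := by
    rw [hd₁]
    exact funext fun _ => derivWithin.neg
  refine ⟨h.continuousOn.neg, fun t ht => (h.contDiffOn t ht).neg, fun t ht u hu => ?_,
    fun t ht => ?_, fun t ht => ?_⟩
  · rw [hd₂]
    exact (h.hasDerivAt t ht u hu).fun_neg
  · rw [hd₂, hd₁, Pi.neg_apply, Pi.neg_apply, h.wentzell t ht, mul_neg]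
  · simp only [hd₁, Pi.neg_apply, h.neumann t ht, neg_zero]

theorem continuousOn_wentzellMass (h : IsWentzellSolution T α ρ) (hT : 0 ≤ T) :
    ContinuousOn (fun t => wentzellMass α (ρ t)) (Icc 0 T) := by
  refine ContinuousOn.add ?_ (continuousOn_intervalIntegral_of_continuousOn_prod hT zero_le_one
    h.continuousOn)
  refine ContinuousOn.div_const ?_ α
  exact h.continuousOn.comp (continuous_id.prodMk continuous_const).continuousOn
    fun t ht => ⟨ht, le_rfl, zero_le_one⟩

/-- The hypotheses on `q` say that `ρ τ₀ + (τ - τ₀) q` is a strict supersolution on `(τ₀, τ₁]`;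
the maximum principle keeps `ρ` below it. -/
theorem le_add_mul_eval_of_supersolution (h : IsWentzellSolution T α ρ) (hα : 0 ≤ α)
    {τ₀ τ₁ : ℝ} (hτ₀ : 0 < τ₀) (hτ₀₁ : τ₀ ≤ τ₁) (hτ₁ : τ₁ ≤ T) {q : ℝ[X]}
    (hq : ∀ τ ∈ Ioc τ₀ τ₁, ∀ u ∈ Icc (0:ℝ) 1,
      derivWithin (derivWithin (ρ τ₀) (Icc 0 1)) (Icc 0 1) u
        + (τ - τ₀) * q.derivative.derivative.eval u < q.eval u)
    (hq₀ : α * q.derivative.eval 0 ≤ q.derivative.derivative.eval 0)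
    (hq₁ : 0 ≤ q.derivative.eval 1) :
    ∀ u ∈ Icc (0:ℝ) 1, ρ τ₁ u ≤ ρ τ₀ u + (τ₁ - τ₀) * q.eval u := by
  have hI : UniqueDiffOn ℝ (Icc (0:ℝ) 1) := uniqueDiffOn_Icc_zero_one
  have hmem : ∀ τ ∈ Ioc τ₀ τ₁, τ ∈ Ioc 0 T := fun τ hτ => ⟨hτ₀.trans hτ.1, hτ.2.trans hτ₁⟩
  have hg := h.contDiffOn τ₀ ⟨hτ₀, hτ₀₁.trans hτ₁⟩
  set w : ℝ → ℝ → ℝ := fun τ u => ρ τ u - ρ τ₀ u - (τ - τ₀) * q.eval u with hw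
  have hw₁ : ∀ τ ∈ Ioc τ₀ τ₁, ∀ u ∈ Icc (0:ℝ) 1, derivWithin (w τ) (Icc 0 1) u =
      derivWithin (ρ τ) (Icc 0 1) u - derivWithin (ρ τ₀) (Icc 0 1) u
        - (τ - τ₀) * q.derivative.eval u := fun τ hτ u hu => by
    simpa [hw] using derivWithin_sub_sub_eval (hI u hu)
      ((h.contDiffOn τ (hmem τ hτ)).differentiableOn two_ne_zero u hu)
      (hg.differentiableOn two_ne_zero u hu) (C (τ - τ₀) * q)
  have hw₂ : ∀ τ ∈ Ioc τ₀ τ₁, ∀ u ∈ Icc (0:ℝ) 1,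
      derivWithin (derivWithin (w τ) (Icc 0 1)) (Icc 0 1) u =
        derivWithin (derivWithin (ρ τ) (Icc 0 1)) (Icc 0 1) u
          - derivWithin (derivWithin (ρ τ₀) (Icc 0 1)) (Icc 0 1) u
          - (τ - τ₀) * q.derivative.derivative.eval u := fun τ hτ u hu => by
    simpa [hw] using derivWithin_derivWithin_sub_sub_eval hI (h.contDiffOn τ (hmem τ hτ)) hg
      (C (τ - τ₀) * q) hu
  have hmax := wentzell_maximum_principle hα (t₁ := τ₀) (t₂ := τ₁) (w := w)
    (W := fun τ u => derivWithin (derivWithin (ρ τ) (Icc 0 1)) (Icc 0 1) u - q.eval u)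
    ?_ ?_ ?_ ?_ ?_ ?_ ?_
  · intro u hu
    linarith [hmax τ₁ ⟨hτ₀₁, le_rfl⟩ u hu]
  · have hρ : ContinuousOn (fun p : ℝ × ℝ => ρ p.1 p.2) (Icc τ₀ τ₁ ×ˢ Icc 0 1) :=
      h.continuousOn.mono (prod_mono (Icc_subset_Icc hτ₀.le hτ₁) le_rfl)
    have hg₀ : ContinuousOn (fun p : ℝ × ℝ => ρ τ₀ p.2) (Icc τ₀ τ₁ ×ˢ Icc 0 1) :=
      hg.continuousOn.comp continuous_snd.continuousOn fun p hp => hp.2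
    exact (hρ.sub hg₀).sub
      ((continuous_fst.sub continuous_const).mul (q.continuous.comp continuous_snd)).continuousOn
  · intro τ hτ
    exact ((h.contDiffOn τ (hmem τ hτ)).sub hg).sub
      (contDiffOn_const.mul q.contDiff_eval.contDiffOn)
  · intro τ hτ u hu
    exact (((h.hasDerivAt τ (hmem τ hτ) u hu).sub_const _).sub
      (((hasDerivAt_id τ).sub_const τ₀).mul_const _)).hasDerivWithinAt.congr_deriv (by simp)
  · intro τ hτ u hu
    rw [hw₂ τ hτ u hu]
    linarith [hq τ hτ u hu]
  · intro τ hτ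
    rw [hw₂ τ hτ 0 ⟨le_rfl, zero_le_one⟩, hw₁ τ hτ 0 ⟨le_rfl, zero_le_one⟩,
      h.wentzell τ (hmem τ hτ), h.wentzell τ₀ ⟨hτ₀, hτ₀₁.trans hτ₁⟩]
    nlinarith [hτ.1]
  · intro τ hτ
    rw [hw₁ τ hτ 1 ⟨zero_le_one, le_rfl⟩, h.neumann τ (hmem τ hτ),
      h.neumann τ₀ ⟨hτ₀, hτ₀₁.trans hτ₁⟩]
    nlinarith [hτ.1]
  · intro u hu
    simp [hw]

theorem eventually_wentzellMass_le (h : IsWentzellSolution T α ρ) (hα : 0 < α) {τ₀ : ℝ}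
    (hτ₀ : τ₀ ∈ Ioo 0 T) {r : ℝ} (hr : 0 < r) :
    ∀ᶠ τ in 𝓝[>] τ₀, wentzellMass α (ρ τ) ≤ wentzellMass α (ρ τ₀) + r * (τ - τ₀) := by
  have hI : UniqueDiffOn ℝ (Icc (0:ℝ) 1) := uniqueDiffOn_Icc_zero_one
  have hτ₀' : τ₀ ∈ Ioc 0 T := Ioo_subset_Ioc_self hτ₀
  have hg := h.contDiffOn τ₀ hτ₀'
  set G := derivWithin (derivWithin (ρ τ₀) (Icc 0 1)) (Icc 0 1)
  have hG : ContinuousOn G (Icc 0 1) :=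
    (hg.derivWithin hI (m := 1) (by norm_num)).continuousOn_derivWithin hI le_rfl
  obtain ⟨δ, hδ, hδr⟩ : ∃ δ > 0, 4 * δ * (α⁻¹ + 1) = r :=
    ⟨r / (4 * (α⁻¹ + 1)), by positivity, by field_simp⟩
  obtain ⟨q, hqG, hq₀, hq₁⟩ := exists_polynomial_wentzell_supersolution hα.le hδ hG
  obtain ⟨Δ, hΔ, hsmall⟩ := isCompact_Icc.exists_pos_forall_mul_lt
    q.derivative.derivative.continuous.continuousOn hδ
  filter_upwards [Ioc_mem_nhdsGT (lt_min (lt_add_of_pos_right τ₀ hΔ) hτ₀.2)] with τ₁ hτ₁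
  have hτ₁T : τ₁ ≤ T := hτ₁.2.trans (min_le_right _ _)
  have hsub : ∀ τ ∈ Ioc τ₀ τ₁, ∀ u ∈ Icc (0:ℝ) 1,
      G u + (τ - τ₀) * q.derivative.derivative.eval u < q.eval u := fun τ hτ u hu => by
    have := hsmall (τ - τ₀) ⟨by linarith [hτ.1], by linarith [hτ.2, hτ₁.2.trans (min_le_left _ _)]⟩
      u hu
    linarith [(hqG u hu).1]
  have hbarrier := h.le_add_mul_eval_of_supersolution hα.le hτ₀.1 hτ₁.1.le hτ₁T hsub hq₀ hq₁
  have hρ₀ : ContinuousOn (ρ τ₀) (Icc 0 1) := hg.continuousOn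
  have hq : ContinuousOn (fun u => q.eval u) (Icc 0 1) := q.continuous.continuousOn
  calc wentzellMass α (ρ τ₁)
      ≤ wentzellMass α (fun u => ρ τ₀ u + (τ₁ - τ₀) * q.eval u) :=
        wentzellMass_mono hα.le (h.contDiffOn τ₁ ⟨hτ₀.1.trans hτ₁.1, hτ₁T⟩).continuousOn
          (hρ₀.add (continuousOn_const.mul hq)) hbarrier
    _ = wentzellMass α (ρ τ₀) + (τ₁ - τ₀) * wentzellMass α (fun u => q.eval u) :=
        wentzellMass_add_mul (hρ₀.intervalIntegrable_of_Icc zero_le_one)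
          (hq.intervalIntegrable_of_Icc zero_le_one) _
    _ ≤ wentzellMass α (ρ τ₀) + (τ₁ - τ₀) * wentzellMass α (fun u => G u + 4 * δ) := by
        gcongr
        · linarith [hτ₁.1]
        · exact wentzellMass_mono hα.le hq (hG.add continuousOn_const) fun u hu => (hqG u hu).2
    _ = wentzellMass α (ρ τ₀) + r * (τ₁ - τ₀) := by
        rw [wentzellMass_add_const (hG.intervalIntegrable_of_Icc zero_le_one),
          wentzellMass_derivWithin_derivWithin hα.ne' hg (h.wentzell τ₀ hτ₀') (h.neumann τ₀ hτ₀')]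
        linear_combination (τ₁ - τ₀) * hδr

theorem wentzellMass_le (h : IsWentzellSolution T α ρ) (hα : 0 < α) {s t : ℝ} (hs : s ∈ Ioc 0 T)
    (ht : t ∈ Ioc 0 T) (hst : s ≤ t) : wentzellMass α (ρ t) ≤ wentzellMass α (ρ s) := by
  refine image_le_of_liminf_slope_right_le_deriv_boundary (B' := fun _ => 0)
    ((h.continuousOn_wentzellMass (hs.1.le.trans hs.2)).mono (Icc_subset_Icc hs.1.le ht.2))
    le_rfl continuousOn_const (fun x _ => hasDerivWithinAt_const x _ _) ?_ ⟨hst, le_rfl⟩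
  intro x hx r (hr : 0 < r)
  have hx' : x ∈ Ioo 0 T := ⟨hs.1.trans_le hx.1, hx.2.trans_le ht.2⟩
  refine (((h.eventually_wentzellMass_le hα hx' (half_pos hr)).and
    self_mem_nhdsWithin).mono fun z ⟨hz, hxz⟩ => ?_).frequently
  rw [slope_def_field, div_lt_iff₀ (sub_pos.2 hxz)]
  nlinarith [hxz]

theorem wentzellMass_eq (h : IsWentzellSolution T α ρ) (hα : 0 < α) {s t : ℝ} (hs : s ∈ Ioc 0 T)
    (ht : t ∈ Ioc 0 T) : wentzellMass α (ρ t) = wentzellMass α (ρ s) := by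
  wlog hst : s ≤ t generalizing s t
  · exact (this ht hs (le_of_not_ge hst)).symm
  refine le_antisymm (h.wentzellMass_le hα hs ht hst) ?_
  simpa only [wentzellMass_neg, neg_le_neg_iff] using h.neg.wentzellMass_le hα hs ht hst

end IsWentzellSolution

theorem stmt5_general (T α : ℝ) (hα : 0 < α) (ρ : ℝ → ℝ → ℝ)
    (hcont : ContinuousOn (fun p : ℝ × ℝ => ρ p.1 p.2) (Set.Icc 0 T ×ˢ Set.Icc 0 1))
    (hspace : ∀ t ∈ Set.Ioc 0 T, ContDiffOn ℝ 2 (ρ t) (Set.Icc (0:ℝ) 1))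
    -- heat equation (extended by continuity to the closed spatial interval), together with
    -- differentiability in time: `∂_t ρ(t,u) = ∂²_{uu} ρ(t,u)`
    (hheat : ∀ t ∈ Set.Ioc 0 T, ∀ u ∈ Set.Icc (0:ℝ) 1,
      HasDerivAt (fun s => ρ s u)
        (derivWithin (derivWithin (ρ t) (Set.Icc (0:ℝ) 1)) (Set.Icc (0:ℝ) 1) u) t)
    (hwentzell : ∀ t ∈ Set.Ioc 0 T,
      derivWithin (derivWithin (ρ t) (Set.Icc (0:ℝ) 1)) (Set.Icc (0:ℝ) 1) 0
        = α * derivWithin (ρ t) (Set.Icc (0:ℝ) 1) 0)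
    (hneu : ∀ t ∈ Set.Ioc 0 T, derivWithin (ρ t) (Set.Icc (0:ℝ) 1) 1 = 0) :
    ∀ t ∈ Set.Ioc 0 T, ∀ s ∈ Set.Ioc 0 T,
      ρ t 0 / α + ∫ u in (0:ℝ)..1, ρ t u = ρ s 0 / α + ∫ u in (0:ℝ)..1, ρ s u :=
  fun _ ht _ hs =>
    IsWentzellSolution.wentzellMass_eq ⟨hcont, hspace, hheat, hwentzell, hneu⟩ hα hs ht

/-- For a classical solution of the heat equation on `[0,T]×[0,1]` with Wentzell boundary
condition `∂²_{uu}ρ(t,0) = α ∂_u ρ(t,0)` and Neumann condition `∂_u ρ(t,1) = 0`, the quantity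
`t ↦ ρ(t,0)/α + ∫₀¹ ρ(t,u) du` is constant in time on `(0,T]`. -/
theorem stmt5 (T α : ℝ) (hT : 0 < T) (hα : 0 < α) (ρ : ℝ → ℝ → ℝ)
    (hcont : ContinuousOn (fun p : ℝ × ℝ => ρ p.1 p.2) (Set.Icc 0 T ×ˢ Set.Icc 0 1))
    (hspace : ∀ t ∈ Set.Ioc 0 T, ContDiffOn ℝ 2 (ρ t) (Set.Icc (0:ℝ) 1))
    -- heat equation (extended by continuity to the closed spatial interval), together with
    -- differentiability in time: `∂_t ρ(t,u) = ∂²_{uu} ρ(t,u)`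
    (hheat : ∀ t ∈ Set.Ioc 0 T, ∀ u ∈ Set.Icc (0:ℝ) 1,
      HasDerivAt (fun s => ρ s u)
        (derivWithin (derivWithin (ρ t) (Set.Icc (0:ℝ) 1)) (Set.Icc (0:ℝ) 1) u) t)
    (hwentzell : ∀ t ∈ Set.Ioc 0 T,
      derivWithin (derivWithin (ρ t) (Set.Icc (0:ℝ) 1)) (Set.Icc (0:ℝ) 1) 0
        = α * derivWithin (ρ t) (Set.Icc (0:ℝ) 1) 0)
    (hneu : ∀ t ∈ Set.Ioc 0 T, derivWithin (ρ t) (Set.Icc (0:ℝ) 1) 1 = 0) :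
    ∀ t ∈ Set.Ioc 0 T, ∀ s ∈ Set.Ioc 0 T,
      ρ t 0 / α + ∫ u in (0:ℝ)..1, ρ t u = ρ s 0 / α + ∫ u in (0:ℝ)..1, ρ s u :=
  stmt5_general T α hα ρ hcont hspace hheat hwentzell hneu
end

section
/- There is at most one weak solution to the heat equation on [0,1] with Neumann boundary conditions at both endpoints: if ρ¹, ρ² : [0,T]×[0,1] → [0,1] are measurable and satisfy ⟨ρ_t, H⟩ − ⟨γ, H⟩ = ∫₀ᵗ ⟨ρ_s, H''⟩ ds for all t ∈ [0,T] and all H ∈ C²[0,1] with H'(0) = H'(1) = 0, with the same γ, then ρ¹_t = ρ²_t in L²[0,1] for all t. -/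
open Set MeasureTheory Real

/-!
Testing the weak formulation against the Neumann eigenfunctions `cos (n π x)`, for which
`H'' = -(n π)² H`, shows that the `n`-th cosine coefficient `a(t)` of the difference of two
solutions satisfies `a(t) = -(n π)² ∫₀ᵗ a(s) ds`, so `a = 0` by Grönwall's inequality. A bounded
function on `[0,1]` whose cosine coefficients all vanish is zero a.e.: its even extension to
`[-1,1]` has vanishing Fourier coefficients, hence zero `L²` norm by Parseval.
-/

theorem intervalIntegrable_of_norm_le {E : Type*} [NormedAddCommGroup E] {f : ℝ → E}
    (hf : AEStronglyMeasurable f volume) {C : ℝ} (hC : ∀ x, ‖f x‖ ≤ C) (a b : ℝ) :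
    IntervalIntegrable f volume a b :=
  intervalIntegrable_const.mono_fun' hf.restrict (ae_of_all _ hC)

theorem Measurable.intervalIntegral_prod_right {f : ℝ → ℝ → ℝ}
    (hf : Measurable (Function.uncurry f)) (a b : ℝ) :
    Measurable fun t => ∫ u in a..b, f t u :=
  (hf.stronglyMeasurable.integral_prod_right' (ν := volume.restrict (Ioc a b))).measurable.sub
    (hf.stronglyMeasurable.integral_prod_right' (ν := volume.restrict (Ioc b a))).measurable

theorem eq_zero_of_eq_const_mul_integral {f : ℝ → ℝ} {a b c : ℝ} (hm : Measurable f)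
    (hi : IntervalIntegrable f volume a b) (heq : ∀ t ∈ Icc a b, f t = c * ∫ s in a..t, f s) :
    ∀ t ∈ Icc a b, f t = 0 := by
  have hprim_cont : ContinuousOn (fun t => ∫ s in a..t, f s) (Icc a b) :=
    (intervalIntegral.continuousOn_primitive_interval' hi left_mem_uIcc).mono Icc_subset_uIcc
  have hprim : ∀ t ∈ Icc a b, (∫ s in a..t, f s) = 0 := by
    refine eq_zero_of_abs_deriv_le_mul_abs_self_of_eq_zero_right (f' := f) (K := |c|)
      hprim_cont (fun t ht => ?_) intervalIntegral.integral_same (fun t ht => ?_)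
    · -- `f` is continuous on `[a, b]` because it is a multiple of its own primitive there.
      have hcont : ContinuousWithinAt f (Ioi t) t :=
        ((continuousOn_const.mul hprim_cont t (Ico_subset_Icc_self ht)).congr heq
          (heq t (Ico_subset_Icc_self ht))).mono_of_mem_nhdsWithin (Icc_mem_nhdsGT_of_mem ht)
      exact intervalIntegral.integral_hasDerivWithinAt_right
        (hi.mono_set (uIcc_subset_uIcc_left (Icc_subset_uIcc (Ico_subset_Icc_self ht))))
        hm.stronglyMeasurable.stronglyMeasurableAtFilter hcont
    · rw [heq t (Ico_subset_Icc_self ht), norm_mul, norm_eq_abs]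
  intro t ht
  rw [heq t ht, hprim t ht, mul_zero]

theorem hasDerivAt_cos_mul (c x : ℝ) :
    HasDerivAt (fun x => cos (c * x)) (-(c * sin (c * x))) x := by
  simpa [mul_comm] using ((hasDerivAt_id x).const_mul c).cos

theorem hasDerivAt_sin_mul (c x : ℝ) : HasDerivAt (fun x => sin (c * x)) (c * cos (c * x)) x := by
  simpa [mul_comm] using ((hasDerivAt_id x).const_mul c).sin

theorem deriv_cos_mul (c : ℝ) : deriv (fun x => cos (c * x)) = fun x => -(c * sin (c * x)) :=
  funext fun x => (hasDerivAt_cos_mul c x).deriv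

theorem deriv_deriv_cos_mul (c : ℝ) :
    deriv (deriv fun x => cos (c * x)) = fun x => -c ^ 2 * cos (c * x) := by
  rw [deriv_cos_mul]
  exact funext fun x => ((hasDerivAt_sin_mul c x).const_mul c).neg.deriv.trans (by ring)

theorem cos_natAbs_mul (n : ℤ) (x : ℝ) : cos (n.natAbs * x) = cos (n * x) := by
  rw [Nat.cast_natAbs, Int.cast_abs]
  rcases abs_choice (n : ℝ) with h | h <;> simp [h, neg_mul, cos_neg]

theorem fourier_neg_add_fourier {T : ℝ} (n : ℤ) (x : ℝ) :
    fourier (-n) ((-x : ℝ) : AddCircle T) + fourier (-n) (x : AddCircle T)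
      = 2 * Complex.cos (2 * π * n * x / T) := by
  rw [fourier_coe_apply, fourier_coe_apply, Complex.cos]
  push_cast
  ring_nf

noncomputable def cosCoeff (f : ℝ → ℝ) (n : ℕ) : ℝ := ∫ u in (0:ℝ)..1, f u * cos (n * π * u)

theorem abs_cosCoeff_le {f : ℝ → ℝ} {C : ℝ} (hf : ∀ u, |f u| ≤ C) (n : ℕ) :
    |cosCoeff f n| ≤ C := by
  have := intervalIntegral.norm_integral_le_of_norm_le_const (a := 0) (b := 1)
    (f := fun u => f u * cos (n * π * u)) fun u _ => by
      rw [norm_mul, norm_eq_abs, norm_eq_abs]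
      exact (mul_le_of_le_one_right (abs_nonneg _) (abs_cos_le_one _)).trans (hf u)
  simpa [cosCoeff] using this

theorem cosCoeff_sub {f g : ℝ → ℝ} (hf : IntervalIntegrable f volume 0 1)
    (hg : IntervalIntegrable g volume 0 1) (n : ℕ) :
    cosCoeff (f - g) n = cosCoeff f n - cosCoeff g n := by
  have hcos : ContinuousOn (fun u => cos (n * π * u)) (uIcc 0 1) := by fun_prop
  rw [cosCoeff, cosCoeff, cosCoeff, ← intervalIntegral.integral_sub (hf.mul_continuousOn hcos)
    (hg.mul_continuousOn hcos)]
  simp only [Pi.sub_apply, sub_mul]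

theorem measurable_cosCoeff {ρ : ℝ → ℝ → ℝ} (hρ : Measurable (Function.uncurry ρ)) (n : ℕ) :
    Measurable fun t => cosCoeff (ρ t) n :=
  Measurable.intervalIntegral_prod_right (f := fun t u => ρ t u * cos (n * π * u))
    (hρ.mul (by fun_prop)) 0 1

theorem fourierCoeffOn_comp_abs {h : ℝ → ℝ} (hm : Measurable h) {C : ℝ} (hb : ∀ u, |h u| ≤ C)
    (n : ℤ) :
    fourierCoeffOn (by norm_num : (-1:ℝ) < 1) (fun x => (h |x| : ℂ)) n = cosCoeff h n.natAbs := by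
  have : Fact ((0:ℝ) < 1 - -1) := ⟨by norm_num⟩
  set k : ℝ → ℂ := fun x => fourier (-n) (x : AddCircle (1 - -1 : ℝ)) • (h |x| : ℂ) with hk
  have hkm : Measurable k :=
    ((fourier (-n)).continuous.comp (AddCircle.continuous_mk' _)).measurable.smul
      (Complex.measurable_ofReal.comp (hm.comp measurable_abs))
  have hkb : ∀ x, ‖k x‖ ≤ C := fun x => by
    rw [hk, norm_smul, Complex.norm_real, norm_eq_abs]
    exact (mul_le_of_le_one_left (abs_nonneg _)
      (((fourier (-n)).norm_coe_le_norm _).trans (fourier_norm _).le)).trans (hb _)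
  have hki := intervalIntegrable_of_norm_le hkm.aestronglyMeasurable hkb
  have hki' : ∀ a b, IntervalIntegrable (fun x => k (-x)) volume a b :=
    intervalIntegrable_of_norm_le (hkm.comp measurable_neg).aestronglyMeasurable (hkb <| - ·)
  have heven : ∀ x ∈ uIcc (0:ℝ) 1,
      k (-x) + k x = 2 * ((h x * cos (n.natAbs * π * x) : ℝ) : ℂ) := by
    intro x hx
    rw [uIcc_of_le zero_le_one] at hx
    simp only [hk, abs_neg, abs_of_nonneg hx.1, smul_eq_mul, ← add_mul, fourier_neg_add_fourier,
      mul_assoc, cos_natAbs_mul]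
    push_cast
    ring_nf
  rw [fourierCoeffOn_eq_integral,
    ← intervalIntegral.integral_add_adjacent_intervals (hki (-1) 0) (hki 0 1),
    show (∫ x in (-1:ℝ)..0, k x) = ∫ x in (0:ℝ)..1, k (-x) by
      rw [intervalIntegral.integral_comp_neg (f := k)]; norm_num,
    ← intervalIntegral.integral_add (hki' 0 1) (hki 0 1),
    intervalIntegral.integral_congr heven, intervalIntegral.integral_const_mul,
    intervalIntegral.integral_ofReal, cosCoeff, Complex.real_smul]
  push_cast
  ring

theorem ae_eq_zero_of_cosCoeff_eq_zero {h : ℝ → ℝ} (hm : Measurable h) {C : ℝ}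
    (hb : ∀ u, |h u| ≤ C) (hc : ∀ n : ℕ, cosCoeff h n = 0) :
    h =ᵐ[volume.restrict (Icc (0:ℝ) 1)] 0 := by
  have hgm : Measurable fun x => (h |x| : ℂ) :=
    Complex.measurable_ofReal.comp (hm.comp measurable_abs)
  have hgb : ∀ x, ‖(h |x| : ℂ)‖ ≤ C := fun x => by simpa using hb |x|
  have hsum := hasSum_sq_fourierCoeffOn (by norm_num : (-1:ℝ) < 1)
    (MemLp.of_bound hgm.aestronglyMeasurable C (ae_of_all _ hgb))
  have hzero : ∀ i : ℤ, fourierCoeffOn (by norm_num : (-1:ℝ) < 1) (fun x => (h |x| : ℂ)) i = 0 :=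
    fun i => by rw [fourierCoeffOn_comp_abs hm hb, hc, Complex.ofReal_zero]
  simp only [hzero, norm_zero, zero_pow two_ne_zero] at hsum
  have hnorm : ∫ x in (-1:ℝ)..1, h |x| ^ 2 = 0 := by simpa using hsum.unique hasSum_zero
  have hint : IntervalIntegrable (fun x => h |x| ^ 2) volume (-1) 1 :=
    intervalIntegrable_of_norm_le ((hm.comp measurable_abs).pow_const 2).aestronglyMeasurable
      (fun x => by rw [norm_pow, norm_eq_abs]; exact pow_le_pow_left₀ (abs_nonneg _) (hb _) 2) _ _
  rw [intervalIntegral.integral_eq_zero_iff_of_nonneg_ae (ae_of_all _ fun x => sq_nonneg _) hint]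
    at hnorm
  rw [← Measure.restrict_congr_set Ioc_ae_eq_Icc]
  filter_upwards [ae_restrict_of_ae_restrict_of_subset
      (Ioc_subset_Ioc_left (by norm_num) |>.trans subset_union_left) hnorm,
    self_mem_ae_restrict measurableSet_Ioc] with x hx hx'
  simpa [abs_of_pos hx'.1] using hx

def IsNeumannHeatWeakSolution (T : ℝ) (γ : ℝ → ℝ) (ρ : ℝ → ℝ → ℝ) : Prop :=
  ∀ H : ℝ → ℝ, ContDiff ℝ 2 H → deriv H 0 = 0 → deriv H 1 = 0 → ∀ t ∈ Icc (0:ℝ) T,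
    (∫ u in (0:ℝ)..1, ρ t u * H u) - (∫ u in (0:ℝ)..1, γ u * H u)
      = ∫ s in (0:ℝ)..t, ∫ u in (0:ℝ)..1, ρ s u * deriv (deriv H) u

namespace IsNeumannHeatWeakSolution

variable {T : ℝ} {γ : ℝ → ℝ}

theorem cosCoeff_sub_cosCoeff {ρ : ℝ → ℝ → ℝ} (hρ : IsNeumannHeatWeakSolution T γ ρ) (n : ℕ)
    {t : ℝ} (ht : t ∈ Icc 0 T) :
    cosCoeff (ρ t) n - cosCoeff γ n = -(n * π) ^ 2 * ∫ s in (0:ℝ)..t, cosCoeff (ρ s) n := by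
  have := hρ (fun x => cos (n * π * x)) (contDiff_const.mul contDiff_id).cos
    (by simp [deriv_cos_mul]) (by simp [deriv_cos_mul, sin_nat_mul_pi]) t ht
  simp only [deriv_deriv_cos_mul] at this
  rw [cosCoeff, cosCoeff, this, ← intervalIntegral.integral_const_mul]
  refine intervalIntegral.integral_congr fun s _ => ?_
  rw [cosCoeff, ← intervalIntegral.integral_const_mul]
  refine intervalIntegral.integral_congr fun u _ => ?_
  ring

theorem cosCoeff_eq {C : ℝ} {ρ₁ ρ₂ : ℝ → ℝ → ℝ}
    (h₁ : IsNeumannHeatWeakSolution T γ ρ₁) (h₂ : IsNeumannHeatWeakSolution T γ ρ₂)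
    (hm₁ : Measurable (Function.uncurry ρ₁)) (hm₂ : Measurable (Function.uncurry ρ₂))
    (hb₁ : ∀ t u, |ρ₁ t u| ≤ C) (hb₂ : ∀ t u, |ρ₂ t u| ≤ C) (n : ℕ) :
    ∀ t ∈ Icc 0 T, cosCoeff (ρ₁ t) n = cosCoeff (ρ₂ t) n := by
  have hi₁ := intervalIntegrable_of_norm_le (measurable_cosCoeff hm₁ n).aestronglyMeasurable
    fun s => abs_cosCoeff_le (hb₁ s) n
  have hi₂ := intervalIntegrable_of_norm_le (measurable_cosCoeff hm₂ n).aestronglyMeasurable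
    fun s => abs_cosCoeff_le (hb₂ s) n
  have hvolterra : ∀ t ∈ Icc 0 T, cosCoeff (ρ₁ t) n - cosCoeff (ρ₂ t) n
      = -(n * π) ^ 2 * ∫ s in (0:ℝ)..t, (cosCoeff (ρ₁ s) n - cosCoeff (ρ₂ s) n) := by
    intro t ht
    rw [intervalIntegral.integral_sub (hi₁ 0 t) (hi₂ 0 t), mul_sub,
      ← h₁.cosCoeff_sub_cosCoeff n ht, ← h₂.cosCoeff_sub_cosCoeff n ht]
    ring
  intro t ht
  exact sub_eq_zero.mp (eq_zero_of_eq_const_mul_integral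
    ((measurable_cosCoeff hm₁ n).sub (measurable_cosCoeff hm₂ n)) ((hi₁ 0 T).sub (hi₂ 0 T))
    hvolterra t ht)

end IsNeumannHeatWeakSolution

theorem stmt9_general (T : ℝ) (γ : ℝ → ℝ)
    (ρ₁ ρ₂ : ℝ → ℝ → ℝ)
    (hmeas₁ : Measurable fun p : ℝ × ℝ => ρ₁ p.1 p.2)
    (hmeas₂ : Measurable fun p : ℝ × ℝ => ρ₂ p.1 p.2)
    (hrange₁ : ∀ t u, ρ₁ t u ∈ Set.Icc (0:ℝ) 1)
    (hrange₂ : ∀ t u, ρ₂ t u ∈ Set.Icc (0:ℝ) 1)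
    (h₁ : ∀ H : ℝ → ℝ, ContDiff ℝ 2 H → deriv H 0 = 0 → deriv H 1 = 0 →
      ∀ t ∈ Set.Icc (0:ℝ) T,
        (∫ u in (0:ℝ)..1, ρ₁ t u * H u) - (∫ u in (0:ℝ)..1, γ u * H u)
          = ∫ s in (0:ℝ)..t, ∫ u in (0:ℝ)..1, ρ₁ s u * deriv (deriv H) u)
    (h₂ : ∀ H : ℝ → ℝ, ContDiff ℝ 2 H → deriv H 0 = 0 → deriv H 1 = 0 →
      ∀ t ∈ Set.Icc (0:ℝ) T,
        (∫ u in (0:ℝ)..1, ρ₂ t u * H u) - (∫ u in (0:ℝ)..1, γ u * H u)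
          = ∫ s in (0:ℝ)..t, ∫ u in (0:ℝ)..1, ρ₂ s u * deriv (deriv H) u) :
    ∀ t ∈ Set.Icc (0:ℝ) T,
      ρ₁ t =ᵐ[MeasureTheory.volume.restrict (Set.Icc (0:ℝ) 1)] ρ₂ t := by
  have habs : ∀ {x : ℝ}, x ∈ Icc (0:ℝ) 1 → |x| ≤ 1 := fun hx =>
    abs_le.mpr ⟨by linarith [hx.1], hx.2⟩
  have hb₁ : ∀ t u, |ρ₁ t u| ≤ 1 := fun t u => habs (hrange₁ t u)
  have hb₂ : ∀ t u, |ρ₂ t u| ≤ 1 := fun t u => habs (hrange₂ t u)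
  intro t ht
  have hsec₁ : Measurable (ρ₁ t) := hmeas₁.comp measurable_prodMk_left
  have hsec₂ : Measurable (ρ₂ t) := hmeas₂.comp measurable_prodMk_left
  have hdiff : ρ₁ t - ρ₂ t =ᵐ[volume.restrict (Icc 0 1)] 0 := by
    refine ae_eq_zero_of_cosCoeff_eq_zero (hsec₁.sub hsec₂) (C := 2)
      (fun u => (abs_sub _ _).trans (by linarith [hb₁ t u, hb₂ t u])) fun n => ?_
    rw [cosCoeff_sub (intervalIntegrable_of_norm_le hsec₁.aestronglyMeasurable (hb₁ t) 0 1)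
      (intervalIntegrable_of_norm_le hsec₂.aestronglyMeasurable (hb₂ t) 0 1), sub_eq_zero]
    exact IsNeumannHeatWeakSolution.cosCoeff_eq h₁ h₂ hmeas₁ hmeas₂ hb₁ hb₂ n t ht
  filter_upwards [hdiff] with u hu using sub_eq_zero.mp hu

/-- Uniqueness of weak solutions to the heat equation on `[0,1]` with Neumann boundary
conditions at both endpoints: two measurable `[0,1]`-valued weak solutions with the same
initial datum `γ` coincide in `L²[0,1]` for all `t ∈ [0,T]`. -/
theorem stmt9 (T : ℝ) (hT : 0 < T) (γ : ℝ → ℝ)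
    (hγmeas : Measurable γ) (hγrange : ∀ u, γ u ∈ Set.Icc (0:ℝ) 1)
    (ρ₁ ρ₂ : ℝ → ℝ → ℝ)
    (hmeas₁ : Measurable fun p : ℝ × ℝ => ρ₁ p.1 p.2)
    (hmeas₂ : Measurable fun p : ℝ × ℝ => ρ₂ p.1 p.2)
    (hrange₁ : ∀ t u, ρ₁ t u ∈ Set.Icc (0:ℝ) 1)
    (hrange₂ : ∀ t u, ρ₂ t u ∈ Set.Icc (0:ℝ) 1)
    (h₁ : ∀ H : ℝ → ℝ, ContDiff ℝ 2 H → deriv H 0 = 0 → deriv H 1 = 0 →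
      ∀ t ∈ Set.Icc (0:ℝ) T,
        (∫ u in (0:ℝ)..1, ρ₁ t u * H u) - (∫ u in (0:ℝ)..1, γ u * H u)
          = ∫ s in (0:ℝ)..t, ∫ u in (0:ℝ)..1, ρ₁ s u * deriv (deriv H) u)
    (h₂ : ∀ H : ℝ → ℝ, ContDiff ℝ 2 H → deriv H 0 = 0 → deriv H 1 = 0 →
      ∀ t ∈ Set.Icc (0:ℝ) T,
        (∫ u in (0:ℝ)..1, ρ₂ t u * H u) - (∫ u in (0:ℝ)..1, γ u * H u)
          = ∫ s in (0:ℝ)..t, ∫ u in (0:ℝ)..1, ρ₂ s u * deriv (deriv H) u) :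
    ∀ t ∈ Set.Icc (0:ℝ) T,
      ρ₁ t =ᵐ[MeasureTheory.volume.restrict (Set.Icc (0:ℝ) 1)] ρ₂ t :=
  stmt9_general T γ ρ₁ ρ₂ hmeas₁ hmeas₂ hrange₁ hrange₂ h₁ h₂
end
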